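/- Let φ, ψ be structural sets in ℝ_{0,m}. For every a ∈ ℝ_{0,m} and k = 1,...,m-1: (m-k+1) Ψ_{k-1}^{φ,ψ}(a) + (k+1) Ψ_{k+1}^{φ,ψ}(a) = Ψ₁^{φ,ψ}(Ψ_k^{φ,ψ}(a)). -/

import Mathlib

open CliffordAlgebra

noncomputable section

/-- The quadratic form of `ℝ_{0,m}`: negative definite on `ℝ^m`. -/
abbrev Qf (m : ℕ) : QuadraticForm ℝ (Fin m → ℝ) :=
  QuadraticMap.weightedSumSquares ℝ (fun _ : Fin m => (-1 : ℝ))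

/-- The real Clifford algebra `ℝ_{0,m}`. -/
abbrev Cl (m : ℕ) := CliffordAlgebra (Qf m)

/-- A structural set: an orthonormal basis `ψ¹,…,ψᵐ` of `ℝᵐ`. -/
def IsStructuralSet {m : ℕ} (ψ : Fin m → (Fin m → ℝ)) : Prop :=
  ∀ i j, (∑ t, ψ i t * ψ j t) = if i = j then (1 : ℝ) else 0

/-- The ordered product `ψ_A = ψ^{j₁} ⋯ ψ^{j_k}` for `A = {j₁ < ⋯ < j_k}`. -/
def prodS {m : ℕ} (ψ : Fin m → (Fin m → ℝ)) (A : Finset (Fin m)) : Cl m :=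
  ((A.sort (· ≤ ·)).map (fun i => ι (Qf m) (ψ i))).prod

/-- The operator `Ψ_k^{φ,ψ}(a) = Σ_{|A|=k} φ_A a ψ̂_A`. -/
def PsiK {m : ℕ} (φ ψ : Fin m → (Fin m → ℝ)) (k : ℕ) (a : Cl m) : Cl m :=
  ∑ A ∈ Finset.univ.filter (fun A : Finset (Fin m) => A.card = k),
    prodS φ A * a * reverse (prodS ψ A)

/-- `Ψ₊ = Σ_{k even} Ψ_k`. -/
def PsiPlus {m : ℕ} (φ ψ : Fin m → (Fin m → ℝ)) (a : Cl m) : Cl m :=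
  ∑ k ∈ (Finset.range (m + 1)).filter (fun k => Even k), PsiK φ ψ k a

/-- `Ψ₋ = Σ_{k odd} Ψ_k`. -/
def PsiMinus {m : ℕ} (φ ψ : Fin m → (Fin m → ℝ)) (a : Cl m) : Cl m :=
  ∑ k ∈ (Finset.range (m + 1)).filter (fun k => Odd k), PsiK φ ψ k a

/-- `Ψ₁^{φ,ψ}(a) = Σⱼ φʲ a ψʲ`. -/
def Psi1 {m : ℕ} (φ ψ : Fin m → (Fin m → ℝ)) (a : Cl m) : Cl m :=
  ∑ j, ι (Qf m) (φ j) * a * ι (Qf m) (ψ j)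

/-- The standard basis of `ℝᵐ`. -/
def stdB {m : ℕ} (i : Fin m) : Fin m → ℝ := Pi.single i 1

/-- The basis multivector `e_A`. -/
def eA {m : ℕ} (A : Finset (Fin m)) : Cl m := prodS stdB A

/-- The element with coefficients `c` in the multivector basis. -/
def toCl {m : ℕ} (c : Finset (Fin m) → ℝ) : Cl m := ∑ A, c A • eA A

/-- The space `ℝ_{0,m}^{(k)}` of `k`-grade multivectors. -/
def gradeK (m k : ℕ) : Submodule ℝ (Cl m) :=
  Submodule.span ℝ {x | ∃ A : Finset (Fin m), A.card = k ∧ x = eA A}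

/-- Coefficient functions of `ℝ_{0,m}`-valued maps. -/
abbrev Coef (m : ℕ) := Finset (Fin m) → ℝ

/-- The coefficients of the even part `f₊`. -/
def cEven {m : ℕ} (c : Coef m) : Coef m := fun A => if Even A.card then c A else 0

/-- The coefficients of the odd part `f₋`. -/
def cOdd {m : ℕ} (c : Coef m) : Coef m := fun A => if Odd A.card then c A else 0

/-- The even part of a Clifford number. -/
def evenPart {m : ℕ} (a : Cl m) : Cl m :=
  (DirectSum.decompose (evenOdd (Qf m)) a 0 : evenOdd (Qf m) 0)

/-- The odd part of a Clifford number. -/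
def oddPart {m : ℕ} (a : Cl m) : Cl m :=
  (DirectSum.decompose (evenOdd (Qf m)) a 1 : evenOdd (Qf m) 1)

/-- Partial derivative `∂F/∂xᵢ` of a coefficient function. -/
def pd {m : ℕ} (i : Fin m) (F : (Fin m → ℝ) → Coef m) : (Fin m → ℝ) → Coef m :=
  fun x => fderiv ℝ F x (Pi.single i 1)

/-- The sandwich operator `φ∂[f]ψ∂ = Σᵢⱼ φⁱ (∂²f/∂xᵢ∂xⱼ) ψʲ` for `f = Σ_A F_A e_A`. -/
def sandwichD {m : ℕ} (φ ψ : Fin m → (Fin m → ℝ)) (F : (Fin m → ℝ) → Coef m)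
    (x : Fin m → ℝ) : Cl m :=
  ∑ i, ∑ j, ι (Qf m) (φ i) * toCl (pd i (pd j F) x) * ι (Qf m) (ψ j)

/-- The operator `φ∂[ψ∂[f]] = Σᵢⱼ φⁱ ψʲ ∂²f/∂xᵢ∂xⱼ`. -/
def ddD {m : ℕ} (φ ψ : Fin m → (Fin m → ℝ)) (F : (Fin m → ℝ) → Coef m)
    (x : Fin m → ℝ) : Cl m :=
  ∑ i, ∑ j, ι (Qf m) (φ i) * (ι (Qf m) (ψ j) * toCl (pd i (pd j F) x))

/-- The componentwise Laplacian `Δf = Σᵢ ∂²f/∂xᵢ²`. -/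
def lapD {m : ℕ} (F : (Fin m → ℝ) → Coef m) (x : Fin m → ℝ) : Cl m :=
  ∑ i, toCl (pd i (pd i F) x)

/-!
Conjugating a summand `φ_A a ψ̂_A` of `Ψ_k` by the pair `(φʲ, ψʲ)` gives the summand of
`A \ {j}` when `j ∈ A`: moving `φʲ` into place in `φ_A` and `ψʲ` into place in `ψ̂_A` costs the
same sign, and `φʲφʲ = ψʲψʲ = -1` cancel. When `j ∉ A` it gives the summand of `A ∪ {j}`, by the
previous case applied to `A ∪ {j}`. So `Ψ₁(Ψ_k(a))` is a sum over pairs of sets differing in one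
element, and double counting gives the coefficients: a `(k-1)`-set extends to `m-k+1` sets of
size `k`, and a `(k+1)`-set has `k+1` subsets of size `k`.
-/

theorem Finset.sort_erase {α : Type*} [LinearOrder α] (A : Finset α) (j : α) :
    (A.erase j).sort (· ≤ ·) = (A.sort (· ≤ ·)).erase j := by
  apply List.Perm.eq_of_pairwise' (Finset.pairwise_sort _ _)
    ((Finset.pairwise_sort A (· ≤ ·)).sublist List.erase_sublist)
  rw [← Multiset.coe_eq_coe, ← Multiset.coe_erase, Finset.sort_eq, Finset.sort_eq,
    Finset.erase_val]

namespace Finset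

variable {α M : Type*} [Fintype α] [DecidableEq α] [AddCommMonoid M]

theorem sum_card_succ_sum_mem_eq_sum_card_sum_compl (k : ℕ) (g : Finset α → α → M) :
    ∑ A with A.card = k + 1, ∑ j ∈ A, g A j
      = ∑ B with B.card = k, ∑ j ∈ Bᶜ, g (insert j B) j := by
  rw [sum_sigma', sum_sigma']
  refine sum_nbij' (fun p => ⟨p.1.erase p.2, p.2⟩) (fun p => ⟨insert p.2 p.1, p.2⟩)
    ?_ ?_ ?_ ?_ ?_ <;> simp +contextual [card_erase_of_mem, card_insert_of_notMem]

theorem sum_card_succ_sum_erase (k : ℕ) (f : Finset α → M) :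
    ∑ A with A.card = k + 1, ∑ j ∈ A, f (A.erase j)
      = (Fintype.card α - k) • ∑ B with B.card = k, f B := by
  rw [sum_card_succ_sum_mem_eq_sum_card_sum_compl, smul_sum]
  refine sum_congr rfl fun B hB => ?_
  rw [sum_congr rfl fun j hj => by rw [erase_insert (mem_compl.mp hj)], sum_const, card_compl,
    (mem_filter.mp hB).2]

theorem sum_card_sum_compl_insert (k : ℕ) (f : Finset α → M) :
    ∑ B with B.card = k, ∑ j ∈ Bᶜ, f (insert j B)
      = (k + 1) • ∑ C with C.card = k + 1, f C := by
  rw [← sum_card_succ_sum_mem_eq_sum_card_sum_compl k (fun C _ => f C), smul_sum]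
  exact sum_congr rfl fun C hC => by rw [sum_const, (mem_filter.mp hC).2]

end Finset

section AnticommutingFamily

variable {R α : Type*} [Ring R] [DecidableEq α] {x : α → R}

theorem mul_prod_map_of_mem (hsq : ∀ i, x i * x i = -1)
    (hanti : ∀ i j, i ≠ j → x i * x j = -(x j * x i)) {j : α} :
    ∀ {L : List α}, j ∈ L →
      x j * (L.map x).prod = (-1 : ℤ) ^ (L.idxOf j + 1) • ((L.erase j).map x).prod
  | b :: L, hj => by
    by_cases hb : b = j
    · subst hb
      simp [← mul_assoc, hsq]
    · have hjL : j ∈ L := (List.mem_cons.mp hj).resolve_left (Ne.symm hb)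
      rw [List.idxOf_cons_ne _ hb, List.erase_cons_tail (by simpa using hb),
        List.map_cons, List.prod_cons, List.map_cons, List.prod_cons, ← mul_assoc,
        hanti _ _ (Ne.symm hb), neg_mul, mul_assoc, mul_prod_map_of_mem hsq hanti hjL,
        mul_smul_comm, ← neg_zsmul, pow_succ _ (_ + 1), mul_neg_one]

end AnticommutingFamily

section StructuralSet

variable {m : ℕ} {u : Fin m → Fin m → ℝ}

theorem IsStructuralSet.qf_apply (hu : IsStructuralSet u) (i : Fin m) : Qf m (u i) = -1 := by
  simpa [QuadraticMap.weightedSumSquares_apply] using congrArg Neg.neg (hu i i)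

theorem IsStructuralSet.ι_mul_self (hu : IsStructuralSet u) (i : Fin m) :
    ι (Qf m) (u i) * ι (Qf m) (u i) = -1 := by
  rw [ι_sq_scalar, hu.qf_apply, map_neg, map_one]

theorem IsStructuralSet.polar_eq_zero (hu : IsStructuralSet u) {i j : Fin m} (h : i ≠ j) :
    QuadraticMap.polar (Qf m) (u i) (u j) = 0 := by
  have hij := hu i j
  rw [if_neg h] at hij
  simp only [QuadraticMap.polar, QuadraticMap.weightedSumSquares_apply, smul_eq_mul,
    ← Finset.sum_sub_distrib, Pi.add_apply]
  calc ∑ t, ((-1) * ((u i t + u j t) * (u i t + u j t)) - (-1) * (u i t * u i t)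
        - (-1) * (u j t * u j t))
      = -2 * ∑ t, u i t * u j t := by rw [Finset.mul_sum]; congr 1; ext t; ring
    _ = 0 := by rw [hij, mul_zero]

theorem IsStructuralSet.ι_mul_ι_anticomm (hu : IsStructuralSet u) {i j : Fin m} (h : i ≠ j) :
    ι (Qf m) (u i) * ι (Qf m) (u j) = -(ι (Qf m) (u j) * ι (Qf m) (u i)) := by
  have h0 := ι_mul_ι_add_swap (Q := Qf m) (u i) (u j)
  rw [hu.polar_eq_zero h, map_zero] at h0
  exact eq_neg_of_add_eq_zero_left h0

end StructuralSet

section Sandwich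

variable {m : ℕ} {φ ψ u : Fin m → Fin m → ℝ} {A : Finset (Fin m)} {j : Fin m}

def psiSummand (φ ψ : Fin m → Fin m → ℝ) (a : Cl m) (A : Finset (Fin m)) : Cl m :=
  prodS φ A * a * reverse (prodS ψ A)

theorem PsiK_eq_sum_psiSummand (φ ψ : Fin m → Fin m → ℝ) (k : ℕ) (a : Cl m) :
    PsiK φ ψ k a = ∑ A with A.card = k, psiSummand φ ψ a A :=
  rfl

theorem IsStructuralSet.ι_mul_prodS_of_mem (hu : IsStructuralSet u) (hj : j ∈ A) :
    ι (Qf m) (u j) * prodS u A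
      = (-1 : ℤ) ^ ((A.sort (· ≤ ·)).idxOf j + 1) • prodS u (A.erase j) := by
  rw [prodS, prodS, A.sort_erase]
  exact mul_prod_map_of_mem hu.ι_mul_self (fun _ _ => hu.ι_mul_ι_anticomm)
    ((Finset.mem_sort _).mpr hj)

theorem IsStructuralSet.reverse_prodS_mul_ι_of_mem (hu : IsStructuralSet u) (hj : j ∈ A) :
    reverse (prodS u A) * ι (Qf m) (u j)
      = (-1 : ℤ) ^ ((A.sort (· ≤ ·)).idxOf j + 1) • reverse (prodS u (A.erase j)) := by
  have h := congrArg reverse (hu.ι_mul_prodS_of_mem hj)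
  rwa [reverse.map_mul, reverse_ι, map_zsmul] at h

theorem ι_mul_psiSummand_mul_ι_of_mem (hφ : IsStructuralSet φ) (hψ : IsStructuralSet ψ)
    (a : Cl m) (hj : j ∈ A) :
    ι (Qf m) (φ j) * psiSummand φ ψ a A * ι (Qf m) (ψ j)
      = psiSummand φ ψ a (A.erase j) := by
  calc ι (Qf m) (φ j) * psiSummand φ ψ a A * ι (Qf m) (ψ j)
      = (ι (Qf m) (φ j) * prodS φ A) * a * (reverse (prodS ψ A) * ι (Qf m) (ψ j)) := by
        simp only [psiSummand, mul_assoc]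
    _ = psiSummand φ ψ a (A.erase j) := by
        rw [hφ.ι_mul_prodS_of_mem hj, hψ.reverse_prodS_mul_ι_of_mem hj, smul_mul_assoc,
          smul_mul_assoc, mul_smul_comm, smul_smul, ← pow_add, ← two_mul, pow_mul, neg_one_sq,
          one_pow, one_smul, psiSummand]

theorem ι_mul_psiSummand_mul_ι_of_notMem (hφ : IsStructuralSet φ) (hψ : IsStructuralSet ψ)
    (a : Cl m) (hj : j ∉ A) :
    ι (Qf m) (φ j) * psiSummand φ ψ a A * ι (Qf m) (ψ j)
      = psiSummand φ ψ a (insert j A) := by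
  have h := ι_mul_psiSummand_mul_ι_of_mem hφ hψ a (Finset.mem_insert_self j A)
  rw [Finset.erase_insert hj] at h
  calc ι (Qf m) (φ j) * psiSummand φ ψ a A * ι (Qf m) (ψ j)
      = (ι (Qf m) (φ j) * ι (Qf m) (φ j)) * psiSummand φ ψ a (insert j A)
          * (ι (Qf m) (ψ j) * ι (Qf m) (ψ j)) := by
        rw [← h]; simp only [mul_assoc]
    _ = psiSummand φ ψ a (insert j A) := by
        rw [hφ.ι_mul_self, hψ.ι_mul_self]; noncomm_ring

theorem Psi1_psiSummand (hφ : IsStructuralSet φ) (hψ : IsStructuralSet ψ) (a : Cl m)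
    (A : Finset (Fin m)) :
    Psi1 φ ψ (psiSummand φ ψ a A) =
      ∑ j ∈ A, psiSummand φ ψ a (A.erase j) + ∑ j ∈ Aᶜ, psiSummand φ ψ a (insert j A) := by
  rw [Psi1, ← Finset.sum_add_sum_compl A]
  congr 1
  · exact Finset.sum_congr rfl fun j hj => ι_mul_psiSummand_mul_ι_of_mem hφ hψ a hj
  · exact Finset.sum_congr rfl fun j hj =>
      ι_mul_psiSummand_mul_ι_of_notMem hφ hψ a (Finset.mem_compl.mp hj)

theorem Psi1_sum (φ ψ : Fin m → Fin m → ℝ) {β : Type*} (s : Finset β) (f : β → Cl m) :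
    Psi1 φ ψ (∑ i ∈ s, f i) = ∑ i ∈ s, Psi1 φ ψ (f i) := by
  simp only [Psi1, Finset.mul_sum, Finset.sum_mul]
  exact Finset.sum_comm

end Sandwich

/-- for structural sets `φ, ψ`, every `a ∈ ℝ_{0,m}` and
`k = 1,…,m-1`: `(m-k+1) Ψ_{k-1}^{φ,ψ}(a) + (k+1) Ψ_{k+1}^{φ,ψ}(a) = Ψ₁^{φ,ψ}(Ψ_k^{φ,ψ}(a))`. -/
theorem psiK_recursion {m : ℕ} (φ ψ : Fin m → (Fin m → ℝ))
    (hφ : IsStructuralSet φ) (hψ : IsStructuralSet ψ) (a : Cl m)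
    (k : ℕ) (hk1 : 1 ≤ k) (hk2 : k ≤ m - 1) :
    ((m - k + 1 : ℕ) : ℝ) • PsiK φ ψ (k - 1) a + ((k + 1 : ℕ) : ℝ) • PsiK φ ψ (k + 1) a
      = Psi1 φ ψ (PsiK φ ψ k a) := by
  obtain ⟨n, rfl⟩ : ∃ n, k = n + 1 := ⟨k - 1, by omega⟩
  have hcoeff : m - (n + 1) + 1 = Fintype.card (Fin m) - n := by
    rw [Fintype.card_fin]; omega
  simp only [PsiK_eq_sum_psiSummand, Psi1_sum, Psi1_psiSummand hφ hψ, Finset.sum_add_distrib,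
    Nat.add_sub_cancel]
  rw [Finset.sum_card_succ_sum_erase, Finset.sum_card_sum_compl_insert, hcoeff,
    Nat.cast_smul_eq_nsmul, Nat.cast_smul_eq_nsmul]
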